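/- arXiv:2506.11554 — 3 statements merged into one kernel-verified Lean document; each statement's English description precedes it below -/
import Mathlib

section
/- Let P, Q ∈ ℤ with P·Q = 0 and let R ∈ ℚ \ ℤ. Then L(P,Q,R) is one of the following: (1) {0}; (2) S_m = {0, m, m+1, m+2, …} for some m ≥ 2; (3) ⟨2⟩; or (4) ⟨2, m⟩ for some odd m ≥ 3. -/
/-- The Lucas sequence `U_n(P,Q)`: `U_0 = 0`, `U_1 = 1`,
`U_{n+2} = P·U_{n+1} − Q·U_n`. -/
def lucasU (P Q : ℤ) : ℕ → ℤ
  | 0 => 0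
  | 1 => 1
  | n + 2 => P * lucasU P Q (n + 1) - Q * lucasU P Q n

/-- The Lucas semigroup `L(P,Q,R) = {n ∈ ℕ : U_n(P,Q)·R ∈ ℤ}`. -/
def lucasSG (P Q : ℤ) (R : ℚ) : Set ℕ :=
  {n : ℕ | ∃ k : ℤ, (lucasU P Q n : ℚ) * R = (k : ℚ)}

/-- Ceiling of the quotient `r / a` of natural numbers. -/
def ceilDivNat (r a : ℕ) : ℕ := (⌈(r : ℚ) / (a : ℚ)⌉).toNat

/-- The ordinary ("tail") semigroup `S_m = {0} ∪ {n ∈ ℕ : n ≥ m}`. -/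
def tailSG (m : ℕ) : Set ℕ := {n : ℕ | n = 0 ∨ m ≤ n}

lemma key (R : ℚ) (a : ℤ) : (∃ k : ℤ, (a:ℚ) * R = k) ↔ (R.den : ℤ) ∣ a := by
  have hden : (R.den : ℚ) ≠ 0 := by exact_mod_cast R.den_nz
  have hR : ((R.num : ℚ)) / R.den = R := R.num_div_den
  have hd : (R.den : ℚ) * R = R.num := by
    rw [mul_comm]; exact ((div_eq_iff hden).mp hR).symm ▸ rfl
  have hcop : IsCoprime (R.den : ℤ) R.num := by
    rw [Int.isCoprime_iff_gcd_eq_one, Int.gcd]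
    simpa [Nat.coprime_comm] using R.reduced
  constructor
  · rintro ⟨k, hk⟩
    have h2 : (a : ℚ) * R.num = k * R.den := by
      rw [← hR] at hk; field_simp at hk; linarith [hk]
    have h3 : a * R.num = k * R.den := by exact_mod_cast h2
    exact hcop.dvd_of_dvd_mul_right ⟨k, by linarith⟩
  · rintro ⟨c, rfl⟩
    refine ⟨c * R.num, ?_⟩
    push_cast
    linear_combination (c : ℚ) * hd

lemma lucasU_Q0 (P : ℤ) (n : ℕ) : lucasU P 0 (n+1) = P ^ n := by
  induction n with
  | zero => simp [lucasU]
  | succ k ih => rw [show k + 1 + 1 = k + 2 from rfl, lucasU, ih]; ring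

lemma lucasU_P0_step (Q : ℤ) (n : ℕ) : lucasU 0 Q (n+2) = -Q * lucasU 0 Q n := by
  rw [lucasU]; ring

lemma lucasU_P0_even (Q : ℤ) (k : ℕ) : lucasU 0 Q (2*k) = 0 := by
  induction k with
  | zero => simp [lucasU]
  | succ j ih => rw [show 2*(j+1) = 2*j+2 by ring, lucasU_P0_step, ih]; ring

lemma lucasU_P0_odd (Q : ℤ) (k : ℕ) : lucasU 0 Q (2*k+1) = (-Q) ^ k := by
  induction k with
  | zero => simp [lucasU]
  | succ j ih => rw [show 2*(j+1)+1 = (2*j+1)+2 by ring, lucasU_P0_step, ih]; ring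

lemma mem_closure_two (n : ℕ) : n ∈ AddSubmonoid.closure ({2} : Set ℕ) ↔ Even n := by
  rw [AddSubmonoid.mem_closure_singleton]
  simp only [smul_eq_mul]
  constructor
  · rintro ⟨k, rfl⟩; exact ⟨k, by omega⟩
  · rintro ⟨k, rfl⟩; exact ⟨k, by omega⟩

lemma mem_closure_pair_odd (m n : ℕ) (hm : Odd m) :
    n ∈ AddSubmonoid.closure ({2, m} : Set ℕ) ↔ Even n ∨ m ≤ n := by
  rw [AddSubmonoid.mem_closure_pair]
  simp only [smul_eq_mul]
  obtain ⟨t, ht⟩ := hm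
  constructor
  · rintro ⟨p, q, rfl⟩
    rcases Nat.eq_zero_or_pos q with rfl | h
    · left; exact ⟨p, by omega⟩
    · right
      have : m ≤ q * m := Nat.le_mul_of_pos_left m h
      omega
  · rintro (⟨p, rfl⟩ | h)
    · exact ⟨p, 0, by omega⟩
    · rcases Nat.even_or_odd n with ⟨j, hj⟩ | ⟨j, hj⟩
      · exact ⟨j, 0, by omega⟩
      · exact ⟨j - t, 1, by omega⟩

/-- If `PQ = 0` and `R ∈ ℚ \ ℤ`, then the Lucas semigroup `L(P,Q,R)` is `{0}`,
a tail `S_m` with `m ≥ 2`, `⟨2⟩`, or `⟨2, m⟩` with `m ≥ 3` odd. -/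
theorem lucasSG_of_PQ_eq_zero (P Q : ℤ) (hPQ : P * Q = 0) (R : ℚ)
    (hR : ¬ ∃ z : ℤ, (z : ℚ) = R) :
    lucasSG P Q R = {0} ∨
    (∃ m : ℕ, 2 ≤ m ∧ lucasSG P Q R = tailSG m) ∨
    lucasSG P Q R = (AddSubmonoid.closure ({2} : Set ℕ) : Set ℕ) ∨
    (∃ m : ℕ, Odd m ∧ 3 ≤ m ∧
      lucasSG P Q R = (AddSubmonoid.closure ({2, m} : Set ℕ) : Set ℕ)) := by
  set D : ℤ := (R.den : ℤ) with hDdef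
  have hd1 : R.den ≠ 1 := fun h => hR ⟨R.num, (Rat.den_eq_one_iff R).mp h⟩
  have hD1 : ¬ D ∣ 1 := by
    intro h
    have h2 : D = 1 := Int.eq_one_of_dvd_one (by positivity) h
    rw [hDdef] at h2
    exact hd1 (by exact_mod_cast h2)
  have hmem : ∀ n, n ∈ lucasSG P Q R ↔ D ∣ lucasU P Q n := fun n => key R _
  rcases mul_eq_zero.mp hPQ with hP | hQ
  · -- P = 0
    subst hP
    by_cases hex : ∃ k, D ∣ (-Q) ^ k
    · have hN := Nat.find_spec hex
      set N := Nat.find hex with hNdef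
      have hN1 : 1 ≤ N := by
        rcases Nat.eq_zero_or_pos N with h | h
        · exfalso; apply hD1; rw [h] at hN; simpa using hN
        · exact h
      right; right; right
      refine ⟨2 * N + 1, ⟨N, by ring⟩, by omega, ?_⟩
      ext n
      rw [hmem n, SetLike.mem_coe, mem_closure_pair_odd _ _ ⟨N, by ring⟩]
      rcases Nat.even_or_odd n with ⟨k, hk⟩ | ⟨k, hk⟩
      · rw [show n = 2 * k by omega, lucasU_P0_even]
        exact ⟨fun _ => Or.inl ⟨k, by omega⟩, fun _ => dvd_zero D⟩
      · rw [show n = 2 * k + 1 by omega, lucasU_P0_odd]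
        constructor
        · intro hdvd
          right
          have hk' : N ≤ k := by
            by_contra hlt
            exact Nat.find_min hex (by omega) hdvd
          omega
        · rintro (⟨j, hj⟩ | h)
          · omega
          · exact dvd_trans hN (pow_dvd_pow _ (by omega))
    · right; right; left
      ext n
      rw [hmem n, SetLike.mem_coe, mem_closure_two]
      rcases Nat.even_or_odd n with ⟨k, hk⟩ | ⟨k, hk⟩
      · rw [show n = 2 * k by omega, lucasU_P0_even]
        exact ⟨fun _ => ⟨k, by omega⟩, fun _ => dvd_zero D⟩
      · rw [show n = 2 * k + 1 by omega, lucasU_P0_odd]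
        constructor
        · intro hdvd; exact absurd ⟨k, hdvd⟩ hex
        · rintro ⟨j, hj⟩; omega
  · -- Q = 0
    subst hQ
    by_cases hex : ∃ k, D ∣ P ^ k
    · have hN := Nat.find_spec hex
      set N := Nat.find hex with hNdef
      have hN1 : 1 ≤ N := by
        rcases Nat.eq_zero_or_pos N with h | h
        · exfalso; apply hD1; rw [h] at hN; simpa using hN
        · exact h
      right; left
      refine ⟨N + 1, by omega, ?_⟩
      ext n
      rw [hmem n, show (n ∈ tailSG (N+1)) = (n = 0 ∨ N + 1 ≤ n) from rfl]
      cases n with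
      | zero => simp [lucasU]
      | succ j =>
        rw [lucasU_Q0]
        constructor
        · intro h
          right
          have hk' : N ≤ j := by
            by_contra hlt
            exact Nat.find_min hex (by omega) h
          omega
        · rintro (h | h)
          · omega
          · exact dvd_trans hN (pow_dvd_pow _ (by omega))
    · left
      ext n
      rw [hmem n]
      simp only [Set.mem_singleton_iff]
      cases n with
      | zero => simp [lucasU]
      | succ j =>
        rw [lucasU_Q0]
        exact ⟨fun h => absurd ⟨j, h⟩ hex, fun h => by omega⟩
end

section
/- Let P, Q ∈ ℤ with P·Q ≠ 0 and let R ∈ ℚ \ ℤ. Suppose that every prime p dividing the denominator of R (written in lowest terms) satisfies p ∤ gcd(P,Q). Then either L(P,Q,R) = {0} or L(P,Q,R) = ⟨m⟩ = mℕ for some m ≥ 2. -/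
/-!
Write `d` for the denominator of `R`, so that `n ∈ L(P,Q,R)` iff `d ∣ U n`.

If a prime `p` divides both `d` and `Q`, regularity gives `p ∤ P`, and `U (n+2) ≡ P U (n+1) (mod p)`
shows that `p` divides no `U (n+1)`: the semigroup is `{0}`.

Otherwise `Q` is invertible mod `d`, so `(x, y) ↦ (y, P y - Q x)` is a permutation of `(ℤ/d)²`;
the orbit of `(0, 1) = (U 0, U 1)` returns, which gives `d ∣ U T` for some `T > 0`. The addition
formula `U (m+n+1) = U (m+1) U (n+1) - Q U m U n`, and the fact that `d ∣ U (m+1)` forces `d` to be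
coprime to `Q U m` (the ideal `(U m, U (m+1))` contains `Q ^ m`), make `d ∣ U n` periodic in `n` with
period `T`. Hence the solutions are the multiples of the least `T`, which is not `1` since `U 1 = 1`
and `d ≠ 1`.
-/

def lucasStep {A : Type*} [CommRing A] (P Q : A) (x : A × A) : A × A :=
  (x.2, P * x.2 - Q * x.1)

lemma lucasStep_injective {A : Type*} [CommRing A] {P Q : A} (hQ : IsUnit Q) :
    Function.Injective (lucasStep P Q) := by
  rintro ⟨a, b⟩ ⟨a', b'⟩ h
  simp only [lucasStep, Prod.mk.injEq] at h
  obtain ⟨rfl, h⟩ := h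
  simpa using hQ.mul_left_cancel (by linear_combination -h : Q * a = Q * a')

section LucasSequence

variable {P Q : ℤ}

lemma lucasU_add_two (n : ℕ) :
    lucasU P Q (n + 2) = P * lucasU P Q (n + 1) - Q * lucasU P Q n := rfl

lemma lucasU_add (m n : ℕ) :
    lucasU P Q (m + n + 1) =
      lucasU P Q (m + 1) * lucasU P Q (n + 1) - Q * lucasU P Q m * lucasU P Q n := by
  induction m using Nat.twoStepInduction generalizing n with
  | zero => simp [lucasU]
  | one => rw [add_comm 1 n, lucasU_add_two]; simp [lucasU]
  | more m ih₁ ih₂ =>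
    have h₂ : lucasU P Q (m + 2) = P * lucasU P Q (m + 1) - Q * lucasU P Q m := lucasU_add_two m
    have h₃ : lucasU P Q (m + 2 + 1) = P * lucasU P Q (m + 2) - Q * lucasU P Q (m + 1) :=
      lucasU_add_two (m + 1)
    rw [show m + 2 + n + 1 = m + n + 1 + 2 by ring, lucasU_add_two,
      show m + n + 1 + 1 = m + 1 + n + 1 by ring, ih₂ n, ih₁ n, h₃, h₂]
    ring

lemma exists_mul_lucasU_add_mul_lucasU_succ_eq_pow (n : ℕ) :
    ∃ a b : ℤ, a * lucasU P Q n + b * lucasU P Q (n + 1) = Q ^ n := by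
  induction n with
  | zero => exact ⟨0, 1, by simp [lucasU]⟩
  | succ n ih =>
    obtain ⟨a, b, h⟩ := ih
    refine ⟨b * Q + a * P, -a, ?_⟩
    rw [lucasU_add_two, pow_succ, ← h]
    ring

lemma not_dvd_lucasU_succ {p : ℤ} (hp : Prime p) (hQ : p ∣ Q) (hP : ¬ p ∣ P) (n : ℕ) :
    ¬ p ∣ lucasU P Q (n + 1) := by
  induction n with
  | zero => simpa [lucasU] using hp.not_dvd_one
  | succ n ih =>
    intro h
    rw [lucasU_add_two] at h
    have : p ∣ P * lucasU P Q (n + 1) := by simpa using dvd_add h (hQ.mul_right (lucasU P Q n))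
    exact (hp.dvd_or_dvd this).elim hP ih

lemma isCoprime_lucasU_of_dvd_lucasU_succ {d : ℤ} (hdQ : IsCoprime d Q) {n : ℕ}
    (hd : d ∣ lucasU P Q (n + 1)) : IsCoprime d (lucasU P Q n) := by
  obtain ⟨a, b, h⟩ := exists_mul_lucasU_add_mul_lucasU_succ_eq_pow (P := P) (Q := Q) n
  obtain ⟨c, hc⟩ := hd
  have : IsCoprime d (a * lucasU P Q n + b * c * d) := by
    rw [mul_assoc, mul_comm c, ← hc, h]
    exact hdQ.pow_right
  exact this.of_add_mul_right_right.of_mul_right_right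

lemma periodic_dvd_lucasU {d : ℤ} (hdQ : IsCoprime d Q) {m : ℕ} (hm : d ∣ lucasU P Q m) :
    Function.Periodic (fun n ↦ d ∣ lucasU P Q n) m := by
  intro n
  obtain _ | m := m
  · rfl
  have hcop : IsCoprime d (Q * lucasU P Q m) :=
    hdQ.mul_right (isCoprime_lucasU_of_dvd_lucasU_succ hdQ hm)
  dsimp only
  rw [eq_iff_iff, show n + (m + 1) = m + n + 1 by ring, lucasU_add, dvd_sub_right (hm.mul_right _)]
  exact ⟨hcop.dvd_of_dvd_mul_left, (·.mul_left _)⟩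

lemma lucasStep_iterate {A : Type*} [CommRing A] (n : ℕ) :
    (lucasStep (P : A) Q)^[n] (0, 1) = ((lucasU P Q n : A), (lucasU P Q (n + 1) : A)) := by
  induction n with
  | zero => simp [lucasU]
  | succ n ih => simp [Function.iterate_succ_apply', ih, lucasStep, lucasU_add_two]

lemma exists_pos_dvd_lucasU {d : ℕ} [NeZero d] (hdQ : IsCoprime (d : ℤ) Q) :
    ∃ T, 0 < T ∧ (d : ℤ) ∣ lucasU P Q T := by
  have hQ : IsUnit (Q : ZMod d) := by
    obtain ⟨a, b, h⟩ := hdQ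
    refine .of_mul_eq_one_right (b : ZMod d) ?_
    simpa using congrArg (Int.cast : ℤ → ZMod d) h
  obtain ⟨T, hT, hper⟩ := Function.mem_periodicPts.mp
    ((lucasStep_injective (P := (P : ZMod d)) hQ).mem_periodicPts (0, 1))
  have hUT := congrArg Prod.fst ((lucasStep_iterate T).symm.trans hper)
  exact ⟨T, hT, (ZMod.intCast_zmod_eq_zero_iff_dvd _ d).mp hUT⟩

lemma exists_dvd_lucasU_iff_dvd {d : ℕ} [NeZero d] (hdQ : IsCoprime (d : ℤ) Q) :
    ∃ r, 0 < r ∧ ∀ n, (d : ℤ) ∣ lucasU P Q n ↔ r ∣ n := by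
  classical
  have hex := exists_pos_dvd_lucasU (P := P) hdQ
  obtain ⟨hr, hdr⟩ := Nat.find_spec hex
  refine ⟨Nat.find hex, hr, fun n ↦ ?_⟩
  have hmod : (d : ℤ) ∣ lucasU P Q (n % Nat.find hex) ↔ (d : ℤ) ∣ lucasU P Q n :=
    (periodic_dvd_lucasU hdQ hdr).map_mod_nat n |>.to_iff
  rw [← hmod, Nat.dvd_iff_mod_eq_zero]
  refine ⟨fun hd ↦ by_contra fun hne ↦ ?_, fun h ↦ by simp [h, lucasU]⟩
  exact Nat.find_min hex (Nat.mod_lt _ hr) ⟨Nat.pos_of_ne_zero hne, hd⟩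

variable {R : ℚ}

lemma mem_lucasSG_iff {n : ℕ} :
    n ∈ lucasSG P Q R ↔ (R.den : ℤ) ∣ lucasU P Q n := by
  have hnum : R * R.den = R.num := Rat.mul_den_eq_num R
  constructor
  · rintro ⟨k, hk⟩
    have hcop : IsCoprime (R.den : ℤ) R.num := by
      simpa [Int.isCoprime_iff_nat_coprime, Nat.coprime_comm] using R.reduced
    refine hcop.dvd_of_dvd_mul_right ⟨k, ?_⟩
    rw [← Int.cast_inj (α := ℚ)]
    push_cast
    rw [← hnum, ← hk]
    ring
  · rintro ⟨t, ht⟩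
    exact ⟨t * R.num, by push_cast [ht, ← hnum]; ring⟩

lemma lucasSG_eq_singleton_zero {p : ℤ} (hp : Prime p) (hpR : p ∣ R.den)
    (hpQ : p ∣ Q) (hpP : ¬ p ∣ P) : lucasSG P Q R = {0} := by
  ext (_ | n)
  · simp [mem_lucasSG_iff, lucasU]
  · simpa [mem_lucasSG_iff] using fun h ↦ not_dvd_lucasU_succ hp hpQ hpP n (hpR.trans h)

lemma lucasSG_eq_closure_singleton (hR : R.den ≠ 1) (hRQ : IsCoprime (R.den : ℤ) Q) :
    ∃ m, 2 ≤ m ∧ lucasSG P Q R = (AddSubmonoid.closure ({m} : Set ℕ) : Set ℕ) := by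
  have : NeZero R.den := ⟨R.den_nz⟩
  obtain ⟨r, hr, hdvd⟩ := exists_dvd_lucasU_iff_dvd (P := P) hRQ
  have hr₁ : r ≠ 1 := by
    rintro rfl
    simpa [lucasU, Int.natCast_dvd, hR] using (hdvd 1).mpr dvd_rfl
  refine ⟨r, by omega, Set.ext fun n ↦ ?_⟩
  simp [mem_lucasSG_iff, hdvd, AddSubmonoid.mem_closure_singleton, dvd_iff_exists_eq_mul_left,
    eq_comm]

end LucasSequence

theorem lucasSG_of_regular_denominator_general (P Q : ℤ) (R : ℚ)
    (hR : ¬ ∃ z : ℤ, (z : ℚ) = R)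
    (hreg : ∀ p : ℕ, p.Prime → p ∣ R.den → ¬ p ∣ Int.gcd P Q) :
    lucasSG P Q R = {0} ∨
      ∃ m : ℕ, 2 ≤ m ∧
        lucasSG P Q R = (AddSubmonoid.closure ({m} : Set ℕ) : Set ℕ) := by
  have hden : R.den ≠ 1 := fun h ↦ hR ⟨R.num, (Rat.den_eq_one_iff R).mp h⟩
  by_cases hRQ : IsCoprime (R.den : ℤ) Q
  · exact .inr (lucasSG_eq_closure_singleton hden hRQ)
  · rw [Int.isCoprime_iff_nat_coprime, Int.natAbs_natCast, Nat.Prime.not_coprime_iff_dvd] at hRQ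
    obtain ⟨p, hp, hpR, hpQ⟩ := hRQ
    have hpQ' : (p : ℤ) ∣ Q := Int.natCast_dvd.mpr hpQ
    refine .inl (lucasSG_eq_singleton_zero (Nat.prime_iff_prime_int.mp hp)
      (Int.natCast_dvd_natCast.mpr hpR) hpQ' fun hpP ↦ hreg p hp hpR ?_)
    exact Int.natCast_dvd_natCast.mp (Int.dvd_coe_gcd hpP hpQ')

/-- If `PQ ≠ 0` and every prime dividing the denominator of `R ∈ ℚ \ ℤ` is
regular (does not divide `gcd(P,Q)`), then `L(P,Q,R)` is `{0}` or cyclic. -/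
theorem lucasSG_of_regular_denominator (P Q : ℤ) (hPQ : P * Q ≠ 0) (R : ℚ)
    (hR : ¬ ∃ z : ℤ, (z : ℚ) = R)
    (hreg : ∀ p : ℕ, p.Prime → p ∣ R.den → ¬ p ∣ Int.gcd P Q) :
    lucasSG P Q R = {0} ∨
      ∃ m : ℕ, 2 ≤ m ∧
        lucasSG P Q R = (AddSubmonoid.closure ({m} : Set ℕ) : Set ℕ) :=
  lucasSG_of_regular_denominator_general P Q R hR hreg
end

section
/- For every integer m ≥ 2 there exist P, Q ∈ ℤ with P·Q ≠ 0, a prime p with p ∤ gcd(P,Q), and an integer r ≥ 1, such that L(P,Q,p^{−r}) = ⟨m⟩ = mℕ. That is, every cyclic subsemigroup ⟨m⟩ of ℕ with m ≥ 2 arises as a local Lucas semigroup at a regular prime. -/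
/-- The local Lucas semigroup `L(P,Q,p^{-r}) = {n ∈ ℕ : ν_p(U_n) ≥ r}`,
equivalently the set of `n` with `U_n · p^{-r} ∈ ℤ`. -/
def localLucasSG (P Q : ℤ) (p : ℕ) (r : ℤ) : Set ℕ :=
  lucasSG P Q ((p : ℚ) ^ (-r))

/-!
Take a prime `p ≡ 1 (mod m)` and an integer `a` whose residue is a primitive `m`-th root of
unity mod `p`. For `(P, Q) = (a + 1, a)` the Lucas sequence is the geometric sum
`U_n = 1 + a + ⋯ + a^(n-1)`, and since `a ≢ 1 (mod p)`, `p ∣ U_n ↔ a^n ≡ 1 ↔ m ∣ n`.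
The prime is regular because `a + 1` and `a` are coprime.
-/

open Finset

theorem geom_sum_eq_zero_iff_pow_eq_one {R : Type*} [Ring R] [NoZeroDivisors R] {x : R}
    (hx : x ≠ 1) (n : ℕ) : ∑ i ∈ range n, x ^ i = 0 ↔ x ^ n = 1 := by
  rw [← sub_eq_zero (a := x ^ n), ← geom_sum_mul, mul_eq_zero, or_iff_left (sub_ne_zero.mpr hx)]

theorem ZMod.exists_isPrimitiveRoot_of_dvd {p m : ℕ} [Fact p.Prime] (hm : m ∣ p - 1) :
    ∃ ζ : ZMod p, IsPrimitiveRoot ζ m := by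
  obtain ⟨g, hg⟩ := IsCyclic.exists_ofOrder_eq_natCard (α := (ZMod p)ˣ)
  rw [Nat.card_eq_fintype_card, ZMod.card_units, ← orderOf_units] at hg
  obtain ⟨k, hk⟩ := hm
  have hp := (Fact.out : p.Prime).two_le
  exact ⟨_, (hg ▸ IsPrimitiveRoot.orderOf _).pow (by omega) (hk.trans (mul_comm m k))⟩

theorem lucasU_add_one_self (a : ℤ) (n : ℕ) : lucasU (a + 1) a n = ∑ i ∈ range n, a ^ i := by
  induction n using Nat.strong_induction_on with
  | _ n ih =>
    match n with
    | 0 => simp [lucasU]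
    | 1 => simp [lucasU]
    | n + 2 =>
      rw [lucasU, ih (n + 1) (by omega), ih n (by omega), sum_range_succ _ (n + 1),
        sum_range_succ _ n]
      ring

theorem mem_localLucasSG_iff {P Q : ℤ} {p : ℕ} (hp : p ≠ 0) (r n : ℕ) :
    n ∈ localLucasSG P Q p r ↔ (p : ℤ) ^ r ∣ lucasU P Q n := by
  have hpr : (p : ℚ) ^ r ≠ 0 := pow_ne_zero _ (Nat.cast_ne_zero.mpr hp)
  simp only [localLucasSG, lucasSG, Set.mem_ofPred_eq, zpow_neg, zpow_natCast,
    ← div_eq_mul_inv, div_eq_iff hpr, Dvd.dvd]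
  refine exists_congr fun k => ?_
  rw [mul_comm (k : ℚ)]
  exact_mod_cast Iff.rfl

theorem localLucasSG_add_one_self_eq_closure {p m : ℕ} [Fact p.Prime] {a : ℤ}
    (ha : IsPrimitiveRoot (a : ZMod p) m) (hm : m ≠ 1) :
    localLucasSG (a + 1) a p 1 = (AddSubmonoid.closure ({m} : Set ℕ) : Set ℕ) := by
  ext n
  have ha1 : (a : ZMod p) ≠ 1 := fun h => hm (ha.eq_orderOf.trans (h ▸ orderOf_one))
  have hmem := mem_localLucasSG_iff (P := a + 1) (Q := a) (Fact.out : p.Prime).ne_zero 1 n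
  rw [Nat.cast_one] at hmem
  rw [SetLike.mem_coe, AddSubmonoid.mem_closure_singleton, hmem, pow_one, lucasU_add_one_self,
    ← ZMod.intCast_zmod_eq_zero_iff_dvd, Int.cast_sum]
  simp only [Int.cast_pow]
  rw [geom_sum_eq_zero_iff_pow_eq_one ha1, ha.pow_eq_one_iff_dvd]
  simp only [smul_eq_mul, dvd_def, eq_comm, mul_comm]

/-- Every cyclic semigroup `⟨m⟩ = mℕ` with `m ≥ 2` arises as a local Lucas
semigroup at a regular prime. -/
theorem exists_localLucasSG_eq_cyclic (m : ℕ) (hm : 2 ≤ m) :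
    ∃ (P Q : ℤ) (p r : ℕ), P * Q ≠ 0 ∧ p.Prime ∧ ¬ p ∣ Int.gcd P Q ∧ 1 ≤ r ∧
      localLucasSG P Q p (r : ℤ) =
        (AddSubmonoid.closure ({m} : Set ℕ) : Set ℕ) := by
  obtain ⟨p, hp, -, hpm⟩ := Nat.exists_prime_gt_modEq_one (k := m) 0 (by omega)
  have : Fact p.Prime := ⟨hp⟩
  obtain ⟨ζ, hζ⟩ := ZMod.exists_isPrimitiveRoot_of_dvd (p := p) (m := m)
    ((Nat.modEq_iff_dvd' hp.one_le).mp hpm.symm)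
  set a : ℤ := (ζ.val : ℤ)
  have ha : (a : ZMod p) = ζ := by simp [a]
  have ha0 : a ≠ 0 := fun h => hζ.ne_zero (by omega) (by rw [← ha, h, Int.cast_zero])
  have hcop : Int.gcd (a + 1) a = 1 := Int.isCoprime_iff_gcd_eq_one.mp ⟨1, -1, by ring⟩
  refine ⟨a + 1, a, p, 1, mul_ne_zero (by omega) ha0, hp, ?_, le_rfl, ?_⟩
  · rw [hcop, Nat.dvd_one]
    exact hp.ne_one
  · exact localLucasSG_add_one_self_eq_closure (ha ▸ hζ) (by omega)
end
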